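/- arXiv:1905.01091 — 4 statements merged into one kernel-verified Lean document; each statement's English description precedes it below -/
import Mathlib

section
/- Let A(x) be the symmetric matrix pencil A(x) = [[x₀,0,x₁,x₂],[0,x₀,x₃,x₄],[x₁,x₃,x₀,0],[x₂,x₄,0,x₀]]. Then the quartic hypersurface S = V(det A(x)) in ℙ⁴ is singular along the quadratic surface V(x₀, x₁x₄ − x₂x₃): every point of that surface lies in the vanishing locus of det A and of all its partial derivatives. -/
open MvPolynomial Matrix

/-- The symmetric matrix pencil of Example "max smooth quadric", with polynomial entries. -/
noncomputable def pencilA : Matrix (Fin 4) (Fin 4) (MvPolynomial (Fin 5) ℂ) :=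
  !![X 0, 0, X 1, X 2;
     0, X 0, X 3, X 4;
     X 1, X 3, X 0, 0;
     X 2, X 4, 0, X 0]

/-!
Expanding the determinant gives `det A = x₀² (x₀² − x₁² − x₂² − x₃² − x₄²) + (x₁x₄ − x₂x₃)²`,
so `det A` lies in the square of the ideal `(x₀, x₁x₄ − x₂x₃)`. By the Leibniz rule, a product
of two polynomials vanishing at a point has all its partial derivatives vanishing there.
-/

theorem MvPolynomial.eval_pderiv_mul_eq_zero {R σ : Type*} [CommSemiring R] {x : σ → R}
    {g h : MvPolynomial σ R} (hg : eval x g = 0) (hh : eval x h = 0) (i : σ) :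
    eval x (pderiv i (g * h)) = 0 := by
  simp [Derivation.leibniz, hg, hh]

noncomputable def pencilQuadric : MvPolynomial (Fin 5) ℂ := X 1 * X 4 - X 2 * X 3

theorem pencilA_det : pencilA.det =
    X 0 * (X 0 * (X 0 ^ 2 - (X 1 ^ 2 + X 2 ^ 2 + X 3 ^ 2 + X 4 ^ 2)))
      + pencilQuadric * pencilQuadric := by
  simp [pencilA, pencilQuadric, det_succ_row_zero, Fin.sum_univ_succ, Fin.succAbove]
  ring

/-- The quartic symmetroid `det A(x) = 0` in `ℙ⁴` is singular along the quadratic surface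
`V(x₀, x₁x₄ − x₂x₃)`: the determinant and all its partial derivatives vanish there. -/
theorem symmetroid_singular_along_quadric (x : Fin 5 → ℂ)
    (h0 : x 0 = 0) (hq : x 1 * x 4 - x 2 * x 3 = 0) :
    eval x pencilA.det = 0 ∧ ∀ i : Fin 5, eval x (pderiv i pencilA.det) = 0 := by
  have hX : eval x (X 0) = 0 := by simpa using h0
  have hX' : eval x (X 0 * (X 0 ^ 2 - (X 1 ^ 2 + X 2 ^ 2 + X 3 ^ 2 + X 4 ^ 2))) = 0 := by
    simp [h0]
  have hQ : eval x pencilQuadric = 0 := by simpa [pencilQuadric] using hq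
  rw [pencilA_det]
  refine ⟨by simp [hX, hX', hQ], fun i => ?_⟩
  rw [map_add, map_add, eval_pderiv_mul_eq_zero hX hX', eval_pderiv_mul_eq_zero hQ hQ, add_zero]
end

section
/- For the symmetric matrix pencil A(x) = [[x₀,x₁,x₂,x₃],[x₁,x₄,−x₃,x₂],[x₂,−x₃,x₅,0],[x₃,x₂,0,x₅]] in six variables, the quartic hypersurface det A(x) = 0 in ℙ⁵ is singular along the two complex conjugate 3-spaces V(x₂ + i x₃, x₅) and V(x₂ − i x₃, x₅), and along the quadratic surface V(x₀ − x₄, x₁, x₂² + x₃² − x₄x₅). -/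
open MvPolynomial Matrix Complex

/-! Every summand of `det A = (q - x₀x₅)(q - x₄x₅) - (x₁x₅)²`, with `q = x₂² + x₃²`, is a product
of two polynomials vanishing on each of the three loci, so by the Leibniz rule `det A` vanishes
to order two there. On the 3-spaces `q = (x₂ + ix₃)(x₂ - ix₃)` and `x₅` vanish; on the quadric
`q = x₀x₅ = x₄x₅` and `x₁ = 0`. -/

/-- The symmetric matrix pencil
`A(x) = [[x₀,x₁,x₂,x₃],[x₁,x₄,−x₃,x₂],[x₂,−x₃,x₅,0],[x₃,x₂,0,x₅]]`. -/
noncomputable def pencilC : Matrix (Fin 4) (Fin 4) (MvPolynomial (Fin 6) ℂ) :=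
  !![X 0, X 1, X 2, X 3;
     X 1, X 4, -(X 3), X 2;
     X 2, -(X 3), X 5, 0;
     X 3, X 2, 0, X 5]

namespace MvPolynomial

variable {σ R : Type*} [CommRing R]

def IsSingularPoint (f : MvPolynomial σ R) (x : σ → R) : Prop :=
  eval x f = 0 ∧ ∀ i, eval x (pderiv i f) = 0

theorem isSingularPoint_mul {f g : MvPolynomial σ R} {x : σ → R}
    (hf : eval x f = 0) (hg : eval x g = 0) : IsSingularPoint (f * g) x :=
  ⟨by simp [hf], fun i => by simp [hf, hg]⟩

theorem IsSingularPoint.sub {f g : MvPolynomial σ R} {x : σ → R}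
    (hf : IsSingularPoint f x) (hg : IsSingularPoint g x) : IsSingularPoint (f - g) x :=
  ⟨by simp [hf.1, hg.1], fun i => by simp [hf.2 i, hg.2 i]⟩

end MvPolynomial

theorem Complex.sq_add_sq_eq_mul (a b : ℂ) : a ^ 2 + b ^ 2 = (a + I * b) * (a - I * b) := by
  linear_combination b ^ 2 * I_sq

theorem pencilC_det_eq : pencilC.det =
    (X 2 ^ 2 + X 3 ^ 2 - X 0 * X 5) * (X 2 ^ 2 + X 3 ^ 2 - X 4 * X 5) -
      (X 1 * X 5) * (X 1 * X 5) := by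
  simp [pencilC, det_succ_row_zero, Fin.sum_univ_succ, Fin.succAbove, Fin.castSucc,
    Fin.castAdd, Fin.castLE]
  ring

theorem isSingularPoint_pencilC_det {x : Fin 6 → ℂ} (h₀ : x 2 ^ 2 + x 3 ^ 2 = x 0 * x 5)
    (h₄ : x 2 ^ 2 + x 3 ^ 2 = x 4 * x 5) (h₁ : x 1 * x 5 = 0) :
    IsSingularPoint pencilC.det x := by
  rw [pencilC_det_eq]
  refine (isSingularPoint_mul ?_ ?_).sub (isSingularPoint_mul ?_ ?_) <;>
    simp only [map_sub, map_add, map_mul, map_pow, eval_X]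
  exacts [sub_eq_zero.mpr h₀, sub_eq_zero.mpr h₄, h₁, h₁]

/-- The quartic `det A(x) = 0` in `ℂℙ⁵` is singular along the two complex conjugate
3-spaces `V(x₂ + ix₃, x₅)` and `V(x₂ − ix₃, x₅)`, and along the quadratic surface
`V(x₀ − x₄, x₁, x₂² + x₃² − x₄x₅)`. -/
theorem symmetroid_singular_two_threespaces_and_quadric :
    (∀ x : Fin 6 → ℂ, x 2 + I * x 3 = 0 → x 5 = 0 →
      eval x pencilC.det = 0 ∧ ∀ i : Fin 6, eval x (pderiv i pencilC.det) = 0) ∧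
    (∀ x : Fin 6 → ℂ, x 2 - I * x 3 = 0 → x 5 = 0 →
      eval x pencilC.det = 0 ∧ ∀ i : Fin 6, eval x (pderiv i pencilC.det) = 0) ∧
    (∀ x : Fin 6 → ℂ, x 0 = x 4 → x 1 = 0 → x 2 ^ 2 + x 3 ^ 2 = x 4 * x 5 →
      eval x pencilC.det = 0 ∧ ∀ i : Fin 6, eval x (pderiv i pencilC.det) = 0) := by
  refine ⟨fun x hp h₅ => ?_, fun x hm h₅ => ?_, fun x h₀₄ h₁ hq => ?_⟩
  · exact isSingularPoint_pencilC_det (by simp [sq_add_sq_eq_mul, hp, h₅])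
      (by simp [sq_add_sq_eq_mul, hp, h₅]) (by simp [h₅])
  · exact isSingularPoint_pencilC_det (by simp [sq_add_sq_eq_mul, hm, h₅])
      (by simp [sq_add_sq_eq_mul, hm, h₅]) (by simp [h₅])
  · exact isSingularPoint_pencilC_det (h₀₄ ▸ hq) hq (by simp [h₁])
end

section
/- Let P be a pencil of quadratic forms on ℂ⁴ spanned by q₁ = l₁·m₁ and q₂ = l₂·m₂, products of linear forms, such that the generic member of P has rank 2 and P contains exactly two rank-1 quadrics 2l² and 2m² (squares of linear forms l, m). Then every member of the pencil vanishes on the codimension-2 linear subspace {l = m = 0} to order 2, i.e. P ⊆ ⟨l, m⟩². -/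
open MvPolynomial

/-- The linear form on `ℂ⁴` with coefficient vector `v`, as a polynomial. -/
noncomputable def linForm (v : Fin 4 → ℂ) : MvPolynomial (Fin 4) ℂ :=
  ∑ j, C (v j) * X j

lemma coeff_linForm (v : Fin 4 → ℂ) (i : Fin 4) :
    coeff (Finsupp.single i 1) (linForm v) = v i := by
  simp [linForm, coeff_sum, coeff_C_mul, coeff_X', Finsupp.single_left_inj]

lemma linForm_inj : Function.Injective linForm := by
  intro v w h
  funext i
  rw [← coeff_linForm v i, ← coeff_linForm w i, h]

lemma linForm_smul (c : ℂ) (v : Fin 4 → ℂ) : linForm (c • v) = C c * linForm v := by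
  simp [linForm, Finset.mul_sum, map_mul, mul_assoc]

lemma sq_ne_C_mul_sq (l m : Fin 4 → ℂ) (hlm : LinearIndependent ℂ ![l, m]) (c : ℂ) :
    linForm l ^ 2 ≠ C c * linForm m ^ 2 := by
  rw [linearIndependent_fin2] at hlm
  obtain ⟨hm, hlne⟩ := hlm
  simp only [Matrix.cons_val_one, Matrix.head_cons, Matrix.cons_val_zero] at hm hlne
  intro h
  obtain ⟨d, hd⟩ := IsAlgClosed.exists_pow_nat_eq c (n := 2) (by norm_num)
  have hfac : (linForm l - C d * linForm m) * (linForm l + C d * linForm m) = 0 := by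
    have hd2 : (C d : MvPolynomial (Fin 4) ℂ) ^ 2 = C c := by rw [← map_pow, hd]
    linear_combination h - linForm m ^ 2 * hd2
  rcases mul_eq_zero.1 hfac with h' | h'
  · have : linForm l = linForm (d • m) := by rw [linForm_smul]; linear_combination h'
    exact hlne d (linForm_inj this).symm
  · have : linForm l = linForm ((-d) • m) := by
      rw [linForm_smul, map_neg]; linear_combination h'
    exact hlne (-d) (linForm_inj this).symm

set_option maxHeartbeats 1000000 in
/-- Let `P` be the pencil of quadratic forms on `ℂ⁴` spanned by the rank-2 forms
`q₁ = l₁·m₁` and `q₂ = l₂·m₂` (products of linear forms), such that the pencil contains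
exactly two rank-1 quadrics, namely `2l²` and `2m²`. Then every member of the pencil
lies in `⟨l, m⟩²`, i.e. vanishes to order 2 on the codimension-2 subspace `{l = m = 0}`. -/
theorem pencil_two_rank_one_members_base_locus
    (l₁ m₁ l₂ m₂ l m : Fin 4 → ℂ)
    (hq₁ : LinearIndependent ℂ ![l₁, m₁]) (hq₂ : LinearIndependent ℂ ![l₂, m₂])
    (hpencil : LinearIndependent ℂ ![linForm l₁ * linForm m₁, linForm l₂ * linForm m₂])
    (hlm : LinearIndependent ℂ ![l, m])
    (h₁ : ∃ a b : ℂ, ¬(a = 0 ∧ b = 0) ∧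
      C a * (linForm l₁ * linForm m₁) + C b * (linForm l₂ * linForm m₂) = 2 * linForm l ^ 2)
    (h₂ : ∃ a b : ℂ, ¬(a = 0 ∧ b = 0) ∧
      C a * (linForm l₁ * linForm m₁) + C b * (linForm l₂ * linForm m₂) = 2 * linForm m ^ 2)
    (hexact : ∀ (a b : ℂ) (v : Fin 4 → ℂ), v ≠ 0 →
      C a * (linForm l₁ * linForm m₁) + C b * (linForm l₂ * linForm m₂) = 2 * linForm v ^ 2 →
      (∃ c : ℂ, v = c • l) ∨ (∃ c : ℂ, v = c • m)) :
    ∀ a b : ℂ,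
      C a * (linForm l₁ * linForm m₁) + C b * (linForm l₂ * linForm m₂) ∈
        Ideal.span {linForm l, linForm m} ^ 2 := by
  intro a b
  obtain ⟨a₁, b₁, h1ne, h1eq⟩ := h₁
  obtain ⟨a₂, b₂, h2ne, h2eq⟩ := h₂
  have two_eq : (2 : MvPolynomial (Fin 4) ℂ) = C 2 := (map_ofNat C 2).symm
  rw [two_eq] at h1eq h2eq
  have e1 : C (a₁ * b₂ - a₂ * b₁) * (linForm l₁ * linForm m₁) =
      C b₂ * (C 2 * linForm l ^ 2) - C b₁ * (C 2 * linForm m ^ 2) := by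
    rw [map_sub, map_mul, map_mul]
    linear_combination C b₂ * h1eq - C b₁ * h2eq
  have e2 : C (a₁ * b₂ - a₂ * b₁) * (linForm l₂ * linForm m₂) =
      C a₁ * (C 2 * linForm m ^ 2) - C a₂ * (C 2 * linForm l ^ 2) := by
    rw [map_sub, map_mul, map_mul]
    linear_combination C a₁ * h2eq - C a₂ * h1eq
  have hmne : m ≠ 0 := by
    have := (linearIndependent_fin2.mp hlm).1
    simpa using this
  have hMne : linForm m ≠ 0 := by
    intro h
    apply hmne
    apply linForm_inj
    rw [h]
    simp [linForm]
  have solve : ∀ u v : ℂ, u ≠ 0 → C u * linForm l ^ 2 = C v * linForm m ^ 2 → False := by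
    intro u v hu h
    apply sq_ne_C_mul_sq l m hlm (u⁻¹ * v)
    have h' : C u⁻¹ * (C u * linForm l ^ 2) = C u⁻¹ * (C v * linForm m ^ 2) := by rw [h]
    rw [← mul_assoc, ← map_mul, inv_mul_cancel₀ hu, map_one, one_mul, ← mul_assoc,
      ← map_mul] at h'
    exact h'
  have hdet : a₁ * b₂ - a₂ * b₁ ≠ 0 := by
    intro hd
    rw [hd, map_zero, zero_mul] at e1 e2
    have eb : C (2 * b₂) * linForm l ^ 2 = C (2 * b₁) * linForm m ^ 2 := by
      rw [map_mul, map_mul]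
      linear_combination -e1
    have ea : C (2 * a₂) * linForm l ^ 2 = C (2 * a₁) * linForm m ^ 2 := by
      rw [map_mul, map_mul]
      linear_combination e2
    by_cases hb2 : b₂ = 0
    · have hb1 : b₁ = 0 := by
        rw [hb2, mul_zero, map_zero, zero_mul] at eb
        have h2b : (2 : ℂ) * b₁ = 0 := by
          by_contra h'
          exact (mul_ne_zero (C_ne_zero.mpr h') (pow_ne_zero 2 hMne)) eb.symm
        simpa using h2b
      have ha1 : a₁ ≠ 0 := fun h' => h1ne ⟨h', hb1⟩
      have ha2 : a₂ ≠ 0 := by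
        intro h'
        rw [h', mul_zero, map_zero, zero_mul] at ea
        have h2a : (2 : ℂ) * a₁ = 0 := by
          by_contra h''
          exact (mul_ne_zero (C_ne_zero.mpr h'') (pow_ne_zero 2 hMne)) ea.symm
        exact ha1 (by simpa using h2a)
      exact solve (2 * a₂) (2 * a₁) (mul_ne_zero two_ne_zero ha2) ea
    · exact solve (2 * b₂) (2 * b₁) (mul_ne_zero two_ne_zero hb2) eb
  have hca : (C (a * (a₁ * b₂ - a₂ * b₁)⁻¹) : MvPolynomial (Fin 4) ℂ) * C (a₁ * b₂ - a₂ * b₁)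
      = C a := by
    rw [← map_mul, mul_assoc, inv_mul_cancel₀ hdet, mul_one]
  have hcb : (C (b * (a₁ * b₂ - a₂ * b₁)⁻¹) : MvPolynomial (Fin 4) ℂ) * C (a₁ * b₂ - a₂ * b₁)
      = C b := by
    rw [← map_mul, mul_assoc, inv_mul_cancel₀ hdet, mul_one]
  have final : C a * (linForm l₁ * linForm m₁) + C b * (linForm l₂ * linForm m₂) =
      C (a * (a₁ * b₂ - a₂ * b₁)⁻¹) *
        (C b₂ * (C 2 * linForm l ^ 2) - C b₁ * (C 2 * linForm m ^ 2))
      + C (b * (a₁ * b₂ - a₂ * b₁)⁻¹) *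
        (C a₁ * (C 2 * linForm m ^ 2) - C a₂ * (C 2 * linForm l ^ 2)) := by
    linear_combination C (a * (a₁ * b₂ - a₂ * b₁)⁻¹) * e1 + C (b * (a₁ * b₂ - a₂ * b₁)⁻¹) * e2
      - (linForm l₁ * linForm m₁) * hca - (linForm l₂ * linForm m₂) * hcb
  rw [final]
  have hLmem : linForm l ^ 2 ∈ Ideal.span {linForm l, linForm m} ^ 2 :=
    Ideal.pow_mem_pow (Ideal.subset_span (Set.mem_insert _ _)) 2
  have hMmem : linForm m ^ 2 ∈ Ideal.span {linForm l, linForm m} ^ 2 :=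
    Ideal.pow_mem_pow (Ideal.subset_span (Set.mem_insert_iff.mpr (Or.inr (Set.mem_singleton _)))) 2
  exact Ideal.add_mem _
    (Ideal.mul_mem_left _ _ (Ideal.sub_mem _
      (Ideal.mul_mem_left _ _ (Ideal.mul_mem_left _ _ hLmem))
      (Ideal.mul_mem_left _ _ (Ideal.mul_mem_left _ _ hMmem))))
    (Ideal.mul_mem_left _ _ (Ideal.sub_mem _
      (Ideal.mul_mem_left _ _ (Ideal.mul_mem_left _ _ hMmem))
      (Ideal.mul_mem_left _ _ (Ideal.mul_mem_left _ _ hLmem))))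
end

section
/- Let l₁, l₂, m₁, m₂ be linear forms on ℂ⁴ with {l₁·m₁, l₂·m₂} linearly independent rank-2 quadratic forms such that every nonzero form in their span has rank exactly 2 (no rank-1 members). Then, after possibly swapping factors, l₁ and l₂ are proportional, i.e. the common factor gives a hyperplane contained in the base locus of the pencil, and the base locus is the union of the hyperplane {l₁ = 0} and the codimension-2 space {m₁ = m₂ = 0}. -/
/-!
In coordinates with respect to a basis of `span {l₁, m₁, l₂, m₂}`, which has dimension 2, 3
or 4, the pencil becomes a pencil of symmetric matrices of that size with the same ranks.
In dimension 2 the pencil of binary forms contains a square (kill the discriminant), of rank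
at most 1. In dimension 4 the form `l₁m₁ + l₂m₂` has rank 4. In dimension 3 let `z` be a factor
of `l₂m₂` outside `span {l₁, m₁}` and `w = r z + p l₁ + q m₁` the other one: the determinant of
`a l₁m₁ + b zw` is `2ab (b p q - a r)`, and its vanishing for all `a, b` forces `r = 0` and
`p q = 0`, i.e. `w` is a multiple of `l₁` or of `m₁`.
-/

open Matrix

namespace Matrix

variable {K : Type*} [Field K] {m n : Type*} [Fintype m]

lemma vecMul_of (x : m → K) (v : m → n → K) : x ᵥ* of v = ∑ i, x i • v i :=
  vecMul_eq_sum x (of v)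

variable [Fintype n]

lemma mulVec_surjective_of_rank_eq_card {A : Matrix m n K} (h : A.rank = Fintype.card m) :
    Function.Surjective A.mulVec := by
  have : LinearMap.range A.mulVecLin = ⊤ := Submodule.eq_top_of_finrank_eq <| by
    rw [Module.finrank_fintype_fun_eq_card, ← h]
    rfl
  exact LinearMap.range_eq_top.mp this

lemma rank_eq_card_iff_det_ne_zero [DecidableEq m] {A : Matrix m m K} :
    A.rank = Fintype.card m ↔ A.det ≠ 0 :=
  ⟨fun h ↦ ((isUnit_iff_isUnit_det A).mp
    (mulVec_surjective_iff_isUnit.mp (mulVec_surjective_of_rank_eq_card h))).ne_zero,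
    rank_of_det_ne_zero⟩

lemma exists_mul_eq_one_of_linearIndependent [DecidableEq m] {v : m → n → K}
    (hv : LinearIndependent K v) : ∃ U : Matrix n m K, of v * U = 1 :=
  mulVec_surjective_iff_exists_right_inverse.mp
    (mulVec_surjective_of_rank_eq_card hv.rank_matrix)

lemma rank_transpose_mul_mul_of_mul_eq_one [DecidableEq m] {V : Matrix m n K}
    {U : Matrix n m K} (hVU : V * U = 1) (A : Matrix m m K) :
    (Vᵀ * A * V).rank = A.rank := by
  refine le_antisymm ((rank_mul_le_left _ _).trans (rank_mul_le_right _ _)) ?_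
  calc A.rank = ((V * U)ᵀ * A * (V * U)).rank := by simp [hVU]
    _ = (Uᵀ * (Vᵀ * A * V) * U).rank := by simp only [transpose_mul, Matrix.mul_assoc]
    _ ≤ (Vᵀ * A * V).rank := (rank_mul_le_left _ _).trans (rank_mul_le_right _ _)

end Matrix

section Pencil

open Submodule

variable {K : Type*} [Field K] {m n : Type*}

/-- Twice the Gram matrix of the quadratic form `v ↦ (x ⬝ᵥ v) * (y ⬝ᵥ v)`. -/
def symVecMulVec (x y : n → K) : Matrix n n K := vecMulVec x y + vecMulVec y x

lemma symVecMulVec_comm (x y : n → K) : symVecMulVec x y = symVecMulVec y x :=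
  add_comm _ _

lemma symVecMulVec_vecMul [Fintype m] (V : Matrix m n K) (x y : m → K) :
    symVecMulVec (x ᵥ* V) (y ᵥ* V) = Vᵀ * symVecMulVec x y * V := by
  have h (x y : m → K) : vecMulVec (x ᵥ* V) (y ᵥ* V) = Vᵀ * vecMulVec x y * V := by
    rw [Matrix.mul_assoc, vecMulVec_mul, mul_vecMulVec, mulVec_transpose]
  simp only [symVecMulVec, h, Matrix.mul_add, Matrix.add_mul]

variable [Fintype n]

def PencilRankTwo (A B : Matrix n n K) : Prop :=
  ∀ a b : K, ¬(a = 0 ∧ b = 0) → (a • A + b • B).rank = 2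

lemma pencilRankTwo_transpose_mul_mul_iff [Fintype m] [DecidableEq m] {V : Matrix m n K}
    {U : Matrix n m K} (hVU : V * U = 1) (A B : Matrix m m K) :
    PencilRankTwo (Vᵀ * A * V) (Vᵀ * B * V) ↔ PencilRankTwo A B := by
  have h (a b : K) : a • (Vᵀ * A * V) + b • (Vᵀ * B * V) = Vᵀ * (a • A + b • B) * V := by
    simp only [Matrix.mul_add, Matrix.add_mul, Matrix.mul_smul, Matrix.smul_mul]
  simp only [PencilRankTwo, h, rank_transpose_mul_mul_of_mul_eq_one hVU]

lemma pencilRankTwo_symVecMulVec_vecMul_iff [Fintype m] [DecidableEq m] {v : m → n → K}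
    (hv : LinearIndependent K v) (x y z w : m → K) :
    PencilRankTwo (symVecMulVec (x ᵥ* of v) (y ᵥ* of v))
      (symVecMulVec (z ᵥ* of v) (w ᵥ* of v)) ↔
      PencilRankTwo (symVecMulVec x y) (symVecMulVec z w) := by
  obtain ⟨U, hU⟩ := exists_mul_eq_one_of_linearIndependent hv
  simp only [symVecMulVec_vecMul, pencilRankTwo_transpose_mul_mul_iff hU]

lemma not_pencilRankTwo_fin_two [IsAlgClosed K] (a b c d : K) :
    ¬PencilRankTwo (symVecMulVec ![1, 0] ![0, 1]) (symVecMulVec ![a, b] ![c, d]) := by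
  intro h
  obtain ⟨ε, hε⟩ := IsAlgClosed.exists_pow_nat_eq (4 * a * b * c * d) two_pos
  apply rank_eq_card_iff_det_ne_zero.mp (h (ε - (a * d + b * c)) 1 (by simp))
  simp [symVecMulVec, det_fin_two]
  linear_combination (-1) * hε

lemma eq_zero_of_pencilRankTwo_fin_three [NeZero (2 : K)] {p q r : K}
    (h : PencilRankTwo (symVecMulVec ![0, 1, 0] ![0, 0, 1])
      (symVecMulVec ![1, 0, 0] ![r, p, q])) :
    r = 0 ∧ (p = 0 ∨ q = 0) := by
  have hdet (a : K) (ha : a ≠ 0) : -2 * a ^ 2 * r + 2 * a * p * q = 0 := by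
    have hrank := h a 1 (by simp)
    have := mt rank_eq_card_iff_det_ne_zero.mpr (by rw [hrank]; simp)
    simp [symVecMulVec, det_fin_three] at this
    linear_combination this
  have e₁ := hdet 1 one_ne_zero
  have e₂ := hdet (-1) (neg_ne_zero.mpr one_ne_zero)
  have hr : (2 : K) * (2 * r) = 0 := by linear_combination -(e₁ + e₂)
  have hpq : (2 : K) * (2 * (p * q)) = 0 := by linear_combination e₁ - e₂
  simp only [mul_eq_zero, two_ne_zero, false_or] at hr hpq
  exact ⟨hr, hpq⟩

lemma not_pencilRankTwo_fin_four :
    ¬PencilRankTwo (symVecMulVec ![0, 0, 1, 0] ![0, 0, 0, 1])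
      (symVecMulVec ![0, 1, 0, 0] ![1, 0, 0, 0] : Matrix (Fin 4) (Fin 4) K) := by
  intro h
  have hrank := h 1 1 (by simp)
  apply absurd (rank_eq_card_iff_det_ne_zero.mpr _) (by rw [hrank]; simp)
  simp [symVecMulVec, det_succ_row_zero, Fin.sum_univ_succ, Fin.succAbove]

lemma not_pencilRankTwo_of_mem_span_pair [IsAlgClosed K] {x y z w : n → K}
    (hv : LinearIndependent K ![x, y]) (hz : z ∈ span K {x, y}) (hw : w ∈ span K {x, y}) :
    ¬PencilRankTwo (symVecMulVec x y) (symVecMulVec z w) := by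
  obtain ⟨a, b, rfl⟩ := mem_span_pair.mp hz
  obtain ⟨c, d, rfl⟩ := mem_span_pair.mp hw
  simpa [vecMul_of, Fin.sum_univ_succ] using
    (pencilRankTwo_symVecMulVec_vecMul_iff hv _ _ _ _).not.mpr (not_pencilRankTwo_fin_two a b c d)

lemma eq_zero_of_pencilRankTwo_of_linearIndependent [NeZero (2 : K)] {x y z w : n → K}
    (hv : LinearIndependent K ![z, x, y]) {p q r : K} (hw : r • z + p • x + q • y = w)
    (h : PencilRankTwo (symVecMulVec x y) (symVecMulVec z w)) : r = 0 ∧ (p = 0 ∨ q = 0) := by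
  apply eq_zero_of_pencilRankTwo_fin_three
  rw [← pencilRankTwo_symVecMulVec_vecMul_iff hv]
  simpa [vecMul_of, Fin.sum_univ_succ, ← hw, add_assoc] using h

lemma not_pencilRankTwo_of_linearIndependent {x y z w : n → K}
    (hv : LinearIndependent K ![w, z, x, y]) :
    ¬PencilRankTwo (symVecMulVec x y) (symVecMulVec z w) := by
  simpa [vecMul_of, Fin.sum_univ_succ] using
    (pencilRankTwo_symVecMulVec_vecMul_iff hv _ _ _ _).not.mpr not_pencilRankTwo_fin_four

lemma mem_span_pair_or_mem_span_pair_of_pencilRankTwo [NeZero (2 : K)] {x y z w : n → K}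
    (hxy : LinearIndependent K ![x, y])
    (h : PencilRankTwo (symVecMulVec x y) (symVecMulVec z w)) :
    z ∈ span K {x, y} ∨ w ∈ span K {x, y} := by
  by_contra! ⟨hz, hw⟩
  have hzxy : LinearIndependent K ![z, x, y] :=
    hxy.finCons (by simpa only [range_cons, range_empty, Set.union_empty, Set.singleton_union])
  by_cases hw' : w ∈ span K {z, x, y}
  · obtain ⟨r, p, q, hrpq⟩ := mem_span_triple.mp hw'
    obtain ⟨rfl, -⟩ := eq_zero_of_pencilRankTwo_of_linearIndependent hzxy hrpq h
    exact hw (mem_span_pair.mpr ⟨p, q, by simp [← hrpq]⟩)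
  · exact not_pencilRankTwo_of_linearIndependent (hzxy.finCons
      (by simpa only [range_cons, range_empty, Set.union_empty, Set.singleton_union])) h

lemma exists_smul_eq_of_mem_span_pair [NeZero (2 : K)] {x y z w : n → K}
    (hxy : LinearIndependent K ![x, y]) (hw₀ : w ≠ 0) (hw : w ∈ span K {x, y})
    (hz : z ∉ span K {x, y}) (h : PencilRankTwo (symVecMulVec x y) (symVecMulVec z w)) :
    ∃ a b, ((a = x ∧ b = y) ∨ (a = y ∧ b = x)) ∧ ∃ c : K, c ≠ 0 ∧ w = c • a := by
  obtain ⟨p, q, rfl⟩ := mem_span_pair.mp hw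
  have hzxy : LinearIndependent K ![z, x, y] :=
    hxy.finCons (by simpa only [range_cons, range_empty, Set.union_empty, Set.singleton_union])
  rcases (eq_zero_of_pencilRankTwo_of_linearIndependent hzxy (r := 0) (p := p) (q := q)
    (by simp) h).2 with rfl | rfl
  · exact ⟨y, x, .inr ⟨rfl, rfl⟩, q, by rintro rfl; simp at hw₀, by simp⟩
  · exact ⟨x, y, .inl ⟨rfl, rfl⟩, p, by rintro rfl; simp at hw₀, by simp⟩

theorem exists_proportional_factors_of_pencilRankTwo [IsAlgClosed K] [NeZero (2 : K)]
    {l₁ m₁ l₂ m₂ : n → K} (h₁ : LinearIndependent K ![l₁, m₁]) (hl₂ : l₂ ≠ 0) (hm₂ : m₂ ≠ 0)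
    (h : PencilRankTwo (symVecMulVec l₁ m₁) (symVecMulVec l₂ m₂)) :
    ∃ a₁ b₁ a₂ b₂ : n → K,
      ((a₁ = l₁ ∧ b₁ = m₁) ∨ (a₁ = m₁ ∧ b₁ = l₁)) ∧
      ((a₂ = l₂ ∧ b₂ = m₂) ∨ (a₂ = m₂ ∧ b₂ = l₂)) ∧
      ∃ c : K, c ≠ 0 ∧ a₂ = c • a₁ := by
  have not_both (hl : l₂ ∈ span K {l₁, m₁}) (hm : m₂ ∈ span K {l₁, m₁}) : False :=
    not_pencilRankTwo_of_mem_span_pair h₁ hl hm h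
  rcases mem_span_pair_or_mem_span_pair_of_pencilRankTwo h₁ h with hl | hm
  · rw [symVecMulVec_comm l₂] at h
    obtain ⟨a₁, b₁, hab, c, hc, rfl⟩ :=
      exists_smul_eq_of_mem_span_pair h₁ hl₂ hl (not_both hl) h
    exact ⟨a₁, b₁, _, m₂, hab, .inl ⟨rfl, rfl⟩, c, hc, rfl⟩
  · obtain ⟨a₁, b₁, hab, c, hc, rfl⟩ :=
      exists_smul_eq_of_mem_span_pair h₁ hm₂ hm (not_both · hm) h
    exact ⟨a₁, b₁, _, l₂, hab, .inr ⟨rfl, rfl⟩, c, hc, rfl⟩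

lemma setOf_mul_eq_zero_and_smul_mul_eq_zero {a b b' : n → K} {c : K} (hc : c ≠ 0) :
    {x | (a ⬝ᵥ x) * (b ⬝ᵥ x) = 0 ∧ ((c • a) ⬝ᵥ x) * (b' ⬝ᵥ x) = 0} =
      {x | a ⬝ᵥ x = 0} ∪ {x | b ⬝ᵥ x = 0 ∧ b' ⬝ᵥ x = 0} := by
  ext x
  simp only [Set.mem_ofPred_eq, Set.mem_union, smul_dotProduct, smul_eq_mul, mul_eq_zero, hc,
    false_or]
  tauto

end Pencil

theorem pencil_no_rank_one_common_factor_general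
    (l₁ m₁ l₂ m₂ : Fin 4 → ℂ)
    (h₁ : LinearIndependent ℂ ![l₁, m₁]) (h₂ : LinearIndependent ℂ ![l₂, m₂])
    (hrank : ∀ a b : ℂ, ¬(a = 0 ∧ b = 0) →
      (a • (vecMulVec l₁ m₁ + vecMulVec m₁ l₁) +
        b • (vecMulVec l₂ m₂ + vecMulVec m₂ l₂)).rank = 2) :
    ∃ a₁ b₁ a₂ b₂ : Fin 4 → ℂ,
      ((a₁ = l₁ ∧ b₁ = m₁) ∨ (a₁ = m₁ ∧ b₁ = l₁)) ∧
      ((a₂ = l₂ ∧ b₂ = m₂) ∨ (a₂ = m₂ ∧ b₂ = l₂)) ∧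
      (∃ c : ℂ, c ≠ 0 ∧ a₂ = c • a₁) ∧
      {x : Fin 4 → ℂ | (l₁ ⬝ᵥ x) * (m₁ ⬝ᵥ x) = 0 ∧ (l₂ ⬝ᵥ x) * (m₂ ⬝ᵥ x) = 0} =
        {x : Fin 4 → ℂ | a₁ ⬝ᵥ x = 0} ∪ {x : Fin 4 → ℂ | b₁ ⬝ᵥ x = 0 ∧ b₂ ⬝ᵥ x = 0} := by
  obtain ⟨a₁, b₁, a₂, b₂, hab₁, hab₂, c, hc, rfl⟩ :=
    exists_proportional_factors_of_pencilRankTwo h₁ (by simpa using h₂.ne_zero 0)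
      (by simpa using h₂.ne_zero 1) hrank
  refine ⟨a₁, b₁, _, b₂, hab₁, hab₂, ⟨c, hc, rfl⟩, ?_⟩
  rw [← setOf_mul_eq_zero_and_smul_mul_eq_zero hc]
  rcases hab₁ with ⟨rfl, rfl⟩ | ⟨rfl, rfl⟩ <;> rcases hab₂ with ⟨h, rfl⟩ | ⟨h, rfl⟩ <;>
    simp only [← h, mul_comm]

/-- Let `q₁ = l₁·m₁` and `q₂ = l₂·m₂` be linearly independent rank-2 quadratic forms on
`ℂ⁴` (with Gram matrices `lᵢmᵢᵀ + mᵢlᵢᵀ`) such that every nonzero member of their span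
has rank exactly 2 (no rank-1 members). Then, after possibly swapping the factors of
`q₁` and `q₂`, the first factors are proportional, and the base locus of the pencil is
the union of the hyperplane cut out by the common factor and the codimension-2 subspace
where the two remaining factors vanish. -/
theorem pencil_no_rank_one_common_factor
    (l₁ m₁ l₂ m₂ : Fin 4 → ℂ)
    (h₁ : LinearIndependent ℂ ![l₁, m₁]) (h₂ : LinearIndependent ℂ ![l₂, m₂])
    (hind : LinearIndependent ℂ
      ![vecMulVec l₁ m₁ + vecMulVec m₁ l₁, vecMulVec l₂ m₂ + vecMulVec m₂ l₂])
    (hrank : ∀ a b : ℂ, ¬(a = 0 ∧ b = 0) →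
      (a • (vecMulVec l₁ m₁ + vecMulVec m₁ l₁) +
        b • (vecMulVec l₂ m₂ + vecMulVec m₂ l₂)).rank = 2) :
    ∃ a₁ b₁ a₂ b₂ : Fin 4 → ℂ,
      ((a₁ = l₁ ∧ b₁ = m₁) ∨ (a₁ = m₁ ∧ b₁ = l₁)) ∧
      ((a₂ = l₂ ∧ b₂ = m₂) ∨ (a₂ = m₂ ∧ b₂ = l₂)) ∧
      (∃ c : ℂ, c ≠ 0 ∧ a₂ = c • a₁) ∧
      {x : Fin 4 → ℂ | (l₁ ⬝ᵥ x) * (m₁ ⬝ᵥ x) = 0 ∧ (l₂ ⬝ᵥ x) * (m₂ ⬝ᵥ x) = 0} =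
        {x : Fin 4 → ℂ | a₁ ⬝ᵥ x = 0} ∪ {x : Fin 4 → ℂ | b₁ ⬝ᵥ x = 0 ∧ b₂ ⬝ᵥ x = 0} :=
  pencil_no_rank_one_common_factor_general l₁ m₁ l₂ m₂ h₁ h₂ hrank
end
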